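/- arXiv:1506.03017 — 2 statements merged into one kernel-verified Lean document; each statement's English description precedes it below -/
import Mathlib

section
/- For integers i > j > 0, the set Γ_x of matrices of the form [[±1, u, w], [0, ±1, v], [0, 0, ±1]] with u, v, w ∈ Z[t], deg(u) ≤ i−j, deg(v) ≤ j, deg(w) ≤ i, and determinant 1, is a subgroup of SL_3(Z[t]). -/
/-!
Matrices of this shape are upper triangular with diagonal entries `±1`, and both properties survive
products and adjugates (the inverse in `SL₃`). In every entry of a product or an adjugate, each
off-diagonal entry appears multiplied only by diagonal signs, which preserves its degree bound,
except for the corner, which also picks up the product `u v`; its degree is at most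
`(i - j) + j = i`.
-/

open Matrix Polynomial

variable {R : Type*} [CommRing R]

section Sign

variable {p q : R[X]} {n : WithBot ℕ}

lemma sign_mul_sign (hp : p = 1 ∨ p = -1) (hq : q = 1 ∨ q = -1) : p * q = 1 ∨ p * q = -1 := by
  rcases hp with rfl | rfl <;> rcases hq with rfl | rfl <;> simp

lemma degree_sign_mul_le (hp : p = 1 ∨ p = -1) (hq : q.degree ≤ n) : (p * q).degree ≤ n := by
  rcases hp with rfl | rfl <;> simpa

lemma degree_mul_sign_le (hq : q = 1 ∨ q = -1) (hp : p.degree ≤ n) : (p * q).degree ≤ n :=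
  mul_comm q p ▸ degree_sign_mul_le hq hp

end Sign

namespace Matrix

def IsBoundedSignedTriangular (a b c : ℕ) (M : Matrix (Fin 3) (Fin 3) R[X]) : Prop :=
  (M 1 0 = 0 ∧ M 2 0 = 0 ∧ M 2 1 = 0) ∧ (∀ k : Fin 3, M k k = 1 ∨ M k k = -1) ∧
    (M 0 1).degree ≤ a ∧ (M 1 2).degree ≤ b ∧ (M 0 2).degree ≤ c

namespace IsBoundedSignedTriangular

variable {a b c : ℕ} {M N : Matrix (Fin 3) (Fin 3) R[X]}

lemma one : IsBoundedSignedTriangular a b c (1 : Matrix (Fin 3) (Fin 3) R[X]) := by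
  refine ⟨⟨?_, ?_, ?_⟩, ?_, ?_, ?_, ?_⟩ <;> simp

lemma mul (habc : a + b ≤ c) (hM : IsBoundedSignedTriangular a b c M)
    (hN : IsBoundedSignedTriangular a b c N) : IsBoundedSignedTriangular a b c (M * N) := by
  obtain ⟨⟨hM10, hM20, hM21⟩, hMd, hMu, hMv, hMw⟩ := hM
  obtain ⟨⟨hN10, hN20, hN21⟩, hNd, hNu, hNv, hNw⟩ := hN
  have huv : (M 0 1 * N 1 2).degree ≤ c :=
    (degree_mul_le_of_le hMu hNv).trans (mod_cast habc)
  simp only [IsBoundedSignedTriangular, Fin.isValue, mul_apply, Fin.sum_univ_three, hM10, hM20,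
    hM21, hN10, hN20, hN21, zero_mul, mul_zero, add_zero, zero_add, and_self, and_true, true_and,
    Fin.forall_fin_succ, Fin.succ_zero_eq_one, Fin.succ_one_eq_two, IsEmpty.forall_iff]
  exact ⟨⟨sign_mul_sign (hMd 0) (hNd 0), sign_mul_sign (hMd 1) (hNd 1),
      sign_mul_sign (hMd 2) (hNd 2)⟩,
    degree_add_le_of_degree_le (degree_sign_mul_le (hMd 0) hNu) (degree_mul_sign_le (hNd 1) hMu),
    degree_add_le_of_degree_le (degree_sign_mul_le (hMd 1) hNv) (degree_mul_sign_le (hNd 2) hMv),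
    degree_add_le_of_degree_le (degree_add_le_of_degree_le (degree_sign_mul_le (hMd 0) hNw) huv)
      (degree_mul_sign_le (hNd 2) hMw)⟩

lemma adjugate (habc : a + b ≤ c) (hM : IsBoundedSignedTriangular a b c M) :
    IsBoundedSignedTriangular a b c M.adjugate := by
  obtain ⟨⟨hM10, hM20, hM21⟩, hMd, hMu, hMv, hMw⟩ := hM
  have huv : (M 0 1 * M 1 2).degree ≤ c :=
    (degree_mul_le_of_le hMu hMv).trans (mod_cast habc)
  simp only [IsBoundedSignedTriangular, Fin.isValue, adjugate_fin_three, hM10, hM20, hM21,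
    zero_mul, mul_zero, sub_zero, add_zero, neg_zero, sub_self, of_apply, cons_val',
    cons_val_zero, cons_val_fin_one, cons_val_one, cons_val, cons_val_succ, and_self,
    Fin.forall_fin_succ, forall_const, degree_neg, true_and]
  exact ⟨⟨sign_mul_sign (hMd 1) (hMd 2), sign_mul_sign (hMd 0) (hMd 2),
      sign_mul_sign (hMd 0) (hMd 1)⟩,
    degree_mul_sign_le (hMd 2) hMu, degree_sign_mul_le (hMd 0) hMv,
    (degree_sub_le _ _).trans (max_le huv (degree_mul_sign_le (hMd 1) hMw))⟩

end IsBoundedSignedTriangular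

variable (R) in
def boundedSignedTriangularSubgroup (a b c : ℕ) (habc : a + b ≤ c) :
    Subgroup (SpecialLinearGroup (Fin 3) R[X]) where
  carrier := {A | IsBoundedSignedTriangular a b c (A : Matrix (Fin 3) (Fin 3) R[X])}
  one_mem' := IsBoundedSignedTriangular.one
  mul_mem' hA hB := hA.mul habc hB
  inv_mem' hA := hA.adjugate habc

end Matrix

theorem stmt2_general (i j : ℕ) (hij : j < i) :
    ∃ H : Subgroup (Matrix.SpecialLinearGroup (Fin 3) (Polynomial ℤ)),
      (H : Set (Matrix.SpecialLinearGroup (Fin 3) (Polynomial ℤ))) =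
        {A : Matrix.SpecialLinearGroup (Fin 3) (Polynomial ℤ) |
             ((A : Matrix (Fin 3) (Fin 3) (Polynomial ℤ)) 1 0 = 0 ∧
              (A : Matrix (Fin 3) (Fin 3) (Polynomial ℤ)) 2 0 = 0 ∧
              (A : Matrix (Fin 3) (Fin 3) (Polynomial ℤ)) 2 1 = 0) ∧
             (∀ k : Fin 3, (A : Matrix (Fin 3) (Fin 3) (Polynomial ℤ)) k k = 1 ∨
                (A : Matrix (Fin 3) (Fin 3) (Polynomial ℤ)) k k = -1) ∧
             ((A : Matrix (Fin 3) (Fin 3) (Polynomial ℤ)) 0 1).degree ≤ (i - j : ℕ) ∧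
             ((A : Matrix (Fin 3) (Fin 3) (Polynomial ℤ)) 1 2).degree ≤ (j : ℕ) ∧
             ((A : Matrix (Fin 3) (Fin 3) (Polynomial ℤ)) 0 2).degree ≤ (i : ℕ)} :=
  ⟨boundedSignedTriangularSubgroup ℤ (i - j) j i (Nat.sub_add_cancel hij.le).le, rfl⟩

/-- for integers `i > j > 0`, the set of matrices
`[[±1, u, w], [0, ±1, v], [0, 0, ±1]]` in `SL₃(ℤ[t])` with
`deg u ≤ i - j`, `deg v ≤ j`, `deg w ≤ i` is a subgroup. -/
theorem stmt2 (i j : ℕ) (hj : 0 < j) (hij : j < i) :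
    ∃ H : Subgroup (Matrix.SpecialLinearGroup (Fin 3) (Polynomial ℤ)),
      (H : Set (Matrix.SpecialLinearGroup (Fin 3) (Polynomial ℤ))) =
        {A : Matrix.SpecialLinearGroup (Fin 3) (Polynomial ℤ) |
             ((A : Matrix (Fin 3) (Fin 3) (Polynomial ℤ)) 1 0 = 0 ∧
              (A : Matrix (Fin 3) (Fin 3) (Polynomial ℤ)) 2 0 = 0 ∧
              (A : Matrix (Fin 3) (Fin 3) (Polynomial ℤ)) 2 1 = 0) ∧
             (∀ k : Fin 3, (A : Matrix (Fin 3) (Fin 3) (Polynomial ℤ)) k k = 1 ∨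
                (A : Matrix (Fin 3) (Fin 3) (Polynomial ℤ)) k k = -1) ∧
             ((A : Matrix (Fin 3) (Fin 3) (Polynomial ℤ)) 0 1).degree ≤ (i - j : ℕ) ∧
             ((A : Matrix (Fin 3) (Fin 3) (Polynomial ℤ)) 1 2).degree ≤ (j : ℕ) ∧
             ((A : Matrix (Fin 3) (Fin 3) (Polynomial ℤ)) 0 2).degree ≤ (i : ℕ)} :=
  stmt2_general i j hij
end

section
/- The group of matrices [[±1, u, w], [0, ±1, v], [0, 0, ±1]] in SL_3(Z[t]) with deg(u) ≤ k, deg(v) ≤ m, deg(w) ≤ m+k (for fixed nonnegative integers k, m) is finitely generated. -/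
/-!
Splitting off the sign diagonal matrix `D = diag(a, b, (ab)⁻¹)` read off from the diagonal, every
element of the group is `D · e₁₂(u) · e₂₃(v) · e₁₃(w - uv)` with `deg u ≤ k`, `deg v ≤ m` and
`deg (w - uv) ≤ m + k`. Since `c ↦ e_{ij}(c)` turns sums into products and the polynomials
of degree `≤ n` are the additive group generated by `1, t, …, tⁿ`, each factor lies in the
subgroup generated by the elementary matrices `e_{ij}(tᵃ)` of bounded degree and the four sign
diagonals.
-/

open Matrix Polynomial

namespace Matrix.SpecialLinearGroup

section transvection

variable {ι F : Type*} [DecidableEq ι] [Fintype ι] [CommRing F] {i j : ι}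

theorem transvection_mem_closure_image (hij : i ≠ j) {s : Set F} {b : F}
    (hb : b ∈ AddSubgroup.closure s) :
    transvection hij b ∈ Subgroup.closure (transvection hij '' s) := by
  induction hb using AddSubgroup.closure_induction with
  | mem b hb => exact Subgroup.subset_closure ⟨b, hb, rfl⟩
  | zero => simp
  | add b c _ _ hb hc => rw [transvection_add]; exact mul_mem hb hc
  | neg b _ hb => rw [← transvection_inv]; exact inv_mem hb

theorem transvection_mem_closure_X_pow (hij : i ≠ j) {p : ℤ[X]} {n : ℕ} (hp : p.degree ≤ n) :
    transvection hij p ∈ Subgroup.closure (transvection hij '' ((X ^ ·) '' Set.Iic n)) := by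
  refine transvection_mem_closure_image hij ?_
  have hspan : (X ^ ·) '' Set.Iic n =
      (((Finset.range (n + 1)).image (X ^ ·) : Finset ℤ[X]) : Set ℤ[X]) := by
    ext; simp
  rw [hspan, ← Submodule.span_int_eq_addSubgroupClosure, Submodule.mem_toAddSubgroup,
    ← degreeLE_eq_span_X_pow]
  exact mem_degreeLE.2 hp

end transvection

variable {R : Type*} [CommRing R]

theorem eq_transvection_mul_of_unitriangular (U : SpecialLinearGroup (Fin 3) R)
    (h10 : U 1 0 = 0) (h20 : U 2 0 = 0) (h21 : U 2 1 = 0)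
    (h00 : U 0 0 = 1) (h11 : U 1 1 = 1) (h22 : U 2 2 = 1) :
    U = transvection (by decide : (0 : Fin 3) ≠ 1) (U 0 1) *
      transvection (by decide : (1 : Fin 3) ≠ 2) (U 1 2) *
      transvection (by decide : (0 : Fin 3) ≠ 2) (U 0 2 - U 0 1 * U 1 2) := by
  ext i j
  fin_cases i <;> fin_cases j <;>
    simp [transvection_coe, mul_apply, Fin.sum_univ_three, one_apply, single_apply, *]

theorem det_diagonal_units_finThree (a b : Rˣ) :
    det (diagonal ![(a : R), b, ↑(a * b)⁻¹]) = 1 := by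
  simp [det_diagonal, Fin.prod_univ_three, mul_assoc]

def diagFinThree : Rˣ × Rˣ →* SpecialLinearGroup (Fin 3) R where
  toFun d := ⟨diagonal ![(d.1 : R), d.2, ↑(d.1 * d.2)⁻¹], det_diagonal_units_finThree d.1 d.2⟩
  map_one' := by ext i j; fin_cases i <;> fin_cases j <;> simp
  map_mul' d e := by
    refine Subtype.ext ((congrArg diagonal ?_).trans (diagonal_mul_diagonal _ _).symm)
    funext i; fin_cases i <;> simp [mul_assoc, mul_comm, mul_left_comm]

theorem coe_diagFinThree (d : Rˣ × Rˣ) :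
    (diagFinThree d : Matrix (Fin 3) (Fin 3) R) = diagonal ![(d.1 : R), d.2, ↑(d.1 * d.2)⁻¹] :=
  rfl

theorem diagFinThree_mul_apply (d : Rˣ × Rˣ) (A : SpecialLinearGroup (Fin 3) R) (i j : Fin 3) :
    (diagFinThree d * A) i j = ![(d.1 : R), d.2, ↑(d.1 * d.2)⁻¹] i * A i j :=
  diagonal_mul _ _ _ _

end Matrix.SpecialLinearGroup

theorem Units.exists_mem_one_neg_one_of_eq_one_or_eq_neg_one {R : Type*} [Monoid R]
    [HasDistribNeg R] {x : R} (hx : x = 1 ∨ x = -1) :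
    ∃ u : Rˣ, u ∈ ({1, -1} : Set Rˣ) ∧ (u : R) = x := by
  rcases hx with rfl | rfl
  exacts [⟨1, by simp⟩, ⟨-1, by simp⟩]

open SpecialLinearGroup

def IsBoundedUpperTriangular (k m : ℕ) (A : SpecialLinearGroup (Fin 3) ℤ[X]) : Prop :=
  (A 1 0 = 0 ∧ A 2 0 = 0 ∧ A 2 1 = 0) ∧ (∀ l, A l l = 1 ∨ A l l = -1) ∧
    (A 0 1).degree ≤ k ∧ (A 1 2).degree ≤ m ∧ (A 0 2).degree ≤ (m + k : ℕ)

namespace IsBoundedUpperTriangular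

def generators (k m : ℕ) : Set (SpecialLinearGroup (Fin 3) ℤ[X]) :=
  transvection (by decide : (0 : Fin 3) ≠ 1) '' ((X ^ ·) '' Set.Iic k) ∪
  transvection (by decide : (1 : Fin 3) ≠ 2) '' ((X ^ ·) '' Set.Iic m) ∪
  transvection (by decide : (0 : Fin 3) ≠ 2) '' ((X ^ ·) '' Set.Iic (m + k)) ∪
  diagFinThree '' ({1, -1} ×ˢ {1, -1})

theorem generators_finite (k m : ℕ) : (generators k m).Finite := by
  apply_rules [Set.Finite.union, Set.Finite.image, Set.finite_Iic, Set.toFinite]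

theorem of_mem_generators {k m : ℕ} {A : SpecialLinearGroup (Fin 3) ℤ[X]}
    (hA : A ∈ generators k m) : IsBoundedUpperTriangular k m A := by
  simp only [generators, Set.mem_union, Set.mem_image, Set.mem_Iic] at hA
  rcases hA with (((⟨_, ⟨a, ha, rfl⟩, rfl⟩ | ⟨_, ⟨a, ha, rfl⟩, rfl⟩) | ⟨_, ⟨a, ha, rfl⟩, rfl⟩) |
    ⟨⟨_, _⟩, ⟨rfl | rfl, rfl | rfl⟩, rfl⟩)
  all_goals
    refine ⟨⟨?_, ?_, ?_⟩, fun l ↦ ?_, ?_, ?_, ?_⟩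
    all_goals try fin_cases l
    all_goals simp [transvection_coe, coe_diagFinThree, one_apply]
  all_goals assumption_mod_cast

theorem mem_closure_generators {k m : ℕ} {A : SpecialLinearGroup (Fin 3) ℤ[X]}
    (hA : IsBoundedUpperTriangular k m A) : A ∈ Subgroup.closure (generators k m) := by
  obtain ⟨⟨h10, h20, h21⟩, hdiag, hu, hv, hw⟩ := hA
  obtain ⟨a, ha, haA⟩ := Units.exists_mem_one_neg_one_of_eq_one_or_eq_neg_one (hdiag 0)
  obtain ⟨b, hb, hbA⟩ := Units.exists_mem_one_neg_one_of_eq_one_or_eq_neg_one (hdiag 1)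
  have hdet : A 0 0 * A 1 1 * A 2 2 = 1 := by
    have := A.det_coe
    rw [det_fin_three, h10, h20, h21] at this
    linear_combination this
  have hdeg (u : ℤ[X]ˣ) (p : ℤ[X]) : (↑u * p).degree = p.degree := by
    rw [degree_mul, degree_coe_units, zero_add]
  rw [← mul_inv_cancel_left (diagFinThree (a, b)) A, ← map_inv]
  refine mul_mem (Subgroup.subset_closure (Or.inr ⟨(a, b), ⟨ha, hb⟩, rfl⟩)) ?_
  set U := diagFinThree (a, b)⁻¹ * A
  have hUA (i j : Fin 3) : U i j = ![(↑a⁻¹ : ℤ[X]), ↑b⁻¹, ↑(a⁻¹ * b⁻¹)⁻¹] i * A i j :=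
    diagFinThree_mul_apply _ _ _ _
  have hU01 : (U 0 1).degree ≤ k := by simpa [hUA, hdeg] using hu
  have hU12 : (U 1 2).degree ≤ m := by simpa [hUA, hdeg] using hv
  have hU02 : (U 0 2 - U 0 1 * U 1 2).degree ≤ (m + k : ℕ) := by
    refine (degree_sub_le _ _).trans (max_le (by simpa [hUA, hdeg] using hw) ?_)
    refine (degree_mul_le_of_le hU01 hU12).trans ?_
    norm_cast; rw [add_comm]
  rw [eq_transvection_mul_of_unitriangular U (by simp [hUA, h10]) (by simp [hUA, h20])
    (by simp [hUA, h21]) (by simp [hUA, ← haA]) (by simp [hUA, ← hbA])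
    (by simp [hUA, haA, hbA]; linear_combination hdet)]
  refine mul_mem (mul_mem ?_ ?_) ?_
  · exact Subgroup.closure_mono (fun _ h ↦ Or.inl (Or.inl (Or.inl h)))
      (transvection_mem_closure_X_pow _ hU01)
  · exact Subgroup.closure_mono (fun _ h ↦ Or.inl (Or.inl (Or.inr h)))
      (transvection_mem_closure_X_pow _ hU12)
  · exact Subgroup.closure_mono (fun _ h ↦ Or.inl (Or.inr h))
      (transvection_mem_closure_X_pow _ hU02)

end IsBoundedUpperTriangular

open IsBoundedUpperTriangular

/-- the group of matrices `[[±1, u, w], [0, ±1, v], [0, 0, ±1]]` in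
`SL₃(ℤ[t])` with `deg u ≤ k`, `deg v ≤ m`, `deg w ≤ m + k` is finitely
generated. -/
theorem stmt3 (k m : ℕ)
    (H : Subgroup (Matrix.SpecialLinearGroup (Fin 3) (Polynomial ℤ)))
    (hH : ∀ A : Matrix.SpecialLinearGroup (Fin 3) (Polynomial ℤ),
      A ∈ H ↔
        ((A : Matrix (Fin 3) (Fin 3) (Polynomial ℤ)) 1 0 = 0 ∧
         (A : Matrix (Fin 3) (Fin 3) (Polynomial ℤ)) 2 0 = 0 ∧
         (A : Matrix (Fin 3) (Fin 3) (Polynomial ℤ)) 2 1 = 0) ∧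
        (∀ l : Fin 3, (A : Matrix (Fin 3) (Fin 3) (Polynomial ℤ)) l l = 1 ∨
           (A : Matrix (Fin 3) (Fin 3) (Polynomial ℤ)) l l = -1) ∧
        ((A : Matrix (Fin 3) (Fin 3) (Polynomial ℤ)) 0 1).degree ≤ (k : ℕ) ∧
        ((A : Matrix (Fin 3) (Fin 3) (Polynomial ℤ)) 1 2).degree ≤ (m : ℕ) ∧
        ((A : Matrix (Fin 3) (Fin 3) (Polynomial ℤ)) 0 2).degree ≤ ((m + k : ℕ)) ) :
    H.FG := by
  refine (Subgroup.fg_iff H).2 ⟨generators k m, le_antisymm ?_ ?_, generators_finite k m⟩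
  · exact (Subgroup.closure_le H).2 fun A hA ↦ (hH A).2 (of_mem_generators hA)
  · exact fun A hA ↦ mem_closure_generators ((hH A).1 hA)
end
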